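/- arXiv:2306.00172 — 4 statements merged into one kernel-verified Lean document; each statement's English description precedes it below -/
import Mathlib

section
/- For every ρ ∈ [0,1], every B ≥ 0, every feasible expert strategy x^π, and every sequence of RL suggestions x̃_1, …, x̃_T (each x̃_v ∈ U ∪ {skip}, and whenever x̃_v = u ∈ U the item u has remaining capacity under LOMAR's own counts, i.e. |V_{u,v−1}| < c(u)), the strategy x produced by LOMAR's switching rule is feasible and its total reward satisfies R_T ≥ ρ·R^π_T − B. -/
/-- `cnt x u v` = `|V_{u,v}|`: the number of online items among steps `1, …, v`
that strategy `x` matches to offline item `u`. -/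
def cnt {U : Type*} [DecidableEq U] (x : ℕ → Option U) (u : U) (v : ℕ) : ℕ :=
  ((Finset.Icc 1 v).filter fun v' => x v' = some u).card

/-- `rew w x v` = `R_v`: the cumulative reward of strategy `x` after step `v`
(skipped steps contribute `0`). -/
def rew {U : Type*} (w : U → ℕ → ℝ) (x : ℕ → Option U) (v : ℕ) : ℝ :=
  ∑ v' ∈ Finset.Icc 1 v, ((x v').elim (0 : ℝ) fun u => w u v')

/-- LOMAR's switching condition at step `v` (no free disposal): the RL suggestion
`x̃_v` may be followed iff
`R_{v−1} + w(x̃_v, v) ≥ ρ·(R^π_v + Σ_u (|V_{u,v−1}| − |V^π_{u,v}| + 1{u = x̃_v})⁺ · wmax(u)) − B`. -/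
def lomarCond {U : Type*} [Fintype U] [DecidableEq U] (wmax : U → ℝ) (w : U → ℕ → ℝ)
    (ρ B : ℝ) (xπ x xt : ℕ → Option U) (v : ℕ) : Prop :=
  rew w x (v - 1) + ((xt v).elim (0 : ℝ) fun u => w u v) ≥
    ρ * (rew w xπ v +
      ∑ u : U, max ((cnt x u (v - 1) : ℝ) - (cnt xπ u v : ℝ) +
        (if xt v = some u then (1 : ℝ) else 0)) 0 * wmax u) - B

/-!
LOMAR keeps the invariant `R_v ≥ ρ·(R^π_v + Σ_u (|V_{u,v}| − |V^π_{u,v}|)⁺·wmax(u)) − B`.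
Following the RL suggestion is allowed exactly when it preserves the invariant.
Following the expert (or skipping together with it) leaves the excess term unchanged and
gains `w ≥ ρ·w`. If LOMAR must skip because the expert's item `u` is full for LOMAR, then
by feasibility of the expert LOMAR is strictly ahead of it on `u`, so the excess term drops
by `wmax(u) ≥ w(u, v)`, which pays for the expert's reward. Dropping the nonnegative excess
term at `v = T` gives the bound.
-/

open Finset

section

variable {U : Type*}

@[simp]
lemma rew_zero (w : U → ℕ → ℝ) (x : ℕ → Option U) : rew w x 0 = 0 := rfl

lemma rew_succ (w : U → ℕ → ℝ) (x : ℕ → Option U) (n : ℕ) :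
    rew w x (n + 1) = rew w x n + (x (n + 1)).elim 0 fun u => w u (n + 1) := by
  rw [rew, rew, sum_Icc_succ_top (Nat.le_add_left 1 n)]

variable [DecidableEq U]

@[simp]
lemma cnt_zero (x : ℕ → Option U) (u : U) : cnt x u 0 = 0 := rfl

lemma cnt_succ (x : ℕ → Option U) (u : U) (n : ℕ) :
    cnt x u (n + 1) = cnt x u n + if x (n + 1) = some u then 1 else 0 := by
  rw [cnt, cnt, card_filter, card_filter, sum_Icc_succ_top (Nat.le_add_left 1 n)]

lemma cnt_mono (x : ℕ → Option U) (u : U) : Monotone (cnt x u) := fun _ _ h =>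
  card_le_card (filter_subset_filter _ (Icc_subset_Icc_right h))

lemma cnt_le_of_forall_lt {x : ℕ → Option U} {c : U → ℕ} {T : ℕ}
    (h : ∀ v, 1 ≤ v → v ≤ T → ∀ u, x v = some u → cnt x u (v - 1) < c u) (u : U) :
    cnt x u T ≤ c u := by
  induction T with
  | zero => simp
  | succ n ih =>
    rw [cnt_succ]
    split_ifs with hu
    · simpa using h (n + 1) (by omega) le_rfl u hu
    · simpa using ih fun v hv₁ hv₂ => h v hv₁ (by omega)

variable [Fintype U]

/-- The ρ-free part of LOMAR's reservation: the largest reward LOMAR can still lose for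
having used offline items more often than the expert. -/
def excessValue (wmax : U → ℝ) (xπ x : ℕ → Option U) (v : ℕ) : ℝ :=
  ∑ u : U, max ((cnt x u v : ℝ) - cnt xπ u v) 0 * wmax u

lemma excessValue_nonneg {wmax : U → ℝ} (hwmax : ∀ u, 0 ≤ wmax u) (xπ x : ℕ → Option U)
    (v : ℕ) : 0 ≤ excessValue wmax xπ x v :=
  sum_nonneg fun u _ => mul_nonneg (le_max_right _ _) (hwmax u)

lemma excessValue_succ_of_eq {wmax : U → ℝ} {xπ x : ℕ → Option U} {n : ℕ}
    (h : x (n + 1) = xπ (n + 1)) :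
    excessValue wmax xπ x (n + 1) = excessValue wmax xπ x n := by
  refine sum_congr rfl fun u _ => ?_
  rw [cnt_succ x, cnt_succ xπ, h]
  push_cast
  ring_nf

lemma excessValue_succ_of_lt {wmax : U → ℝ} {xπ x : ℕ → Option U} {n : ℕ} {u₀ : U}
    (hx : x (n + 1) = none) (hπ : xπ (n + 1) = some u₀) (hlt : cnt xπ u₀ n < cnt x u₀ n) :
    excessValue wmax xπ x (n + 1) = excessValue wmax xπ x n - wmax u₀ := by
  have hterm : ∀ u, max ((cnt x u (n + 1) : ℝ) - cnt xπ u (n + 1)) 0 * wmax u =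
      max ((cnt x u n : ℝ) - cnt xπ u n) 0 * wmax u - if u = u₀ then wmax u₀ else 0 := by
    intro u
    rw [cnt_succ, cnt_succ xπ, hx, hπ]
    by_cases hu : u = u₀
    · subst hu
      have hlt' : (cnt xπ u n : ℝ) + 1 ≤ cnt x u n := by exact_mod_cast hlt
      simp only [reduceCtorEq, if_false, if_true, Nat.cast_add, Nat.cast_one, add_zero]
      rw [max_eq_left (by linarith), max_eq_left (by linarith)]
      ring
    · simp [Ne.symm hu, hu]
  simp only [excessValue, hterm, sum_sub_distrib, sum_ite_eq', mem_univ, if_true]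

section Lomar

variable (c : U → ℕ) (wmax : U → ℝ) (w : U → ℕ → ℝ) (ρ B : ℝ)
  (xπ x xt : ℕ → Option U)

/-- LOMAR's possible moves at step `v`, forgetting which branch of the switching rule led to
an expert move or a skip. -/
inductive LomarMove (v : ℕ) : Prop
  | followRL : lomarCond wmax w ρ B xπ x xt v → x v = xt v → LomarMove v
  | followExpert (u : U) : xπ v = some u → cnt x u (v - 1) < c u → x v = some u → LomarMove v
  | skip : x v = none → (∀ u, xπ v = some u → c u ≤ cnt x u (v - 1)) → LomarMove v

variable {c wmax w ρ B xπ x xt}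

lemma lomarMove_of_switchingRule {v : ℕ}
    (hfollow : lomarCond wmax w ρ B xπ x xt v → x v = xt v)
    (hexpert : ¬ lomarCond wmax w ρ B xπ x xt v →
      ∀ u, xπ v = some u → cnt x u (v - 1) < c u → x v = some u)
    (hskip : ¬ lomarCond wmax w ρ B xπ x xt v →
      (xπ v = none ∨ ∃ u, xπ v = some u ∧ ¬ cnt x u (v - 1) < c u) → x v = none) :
    LomarMove c wmax w ρ B xπ x xt v := by
  by_cases hc : lomarCond wmax w ρ B xπ x xt v
  · exact .followRL hc (hfollow hc)
  cases hπ : xπ v with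
  | none => exact .skip (hskip hc (.inl hπ)) (by simp [hπ])
  | some u =>
    by_cases hcap : cnt x u (v - 1) < c u
    · exact .followExpert u hπ hcap (hexpert hc u hπ hcap)
    · exact .skip (hskip hc (.inr ⟨u, hπ, hcap⟩)) fun u' hu' =>
        Option.some_injective _ (hπ ▸ hu') ▸ not_lt.mp hcap

lemma LomarMove.cnt_lt {v : ℕ} (hmove : LomarMove c wmax w ρ B xπ x xt v)
    (hxt : ∀ u, xt v = some u → cnt x u (v - 1) < c u) {u : U} (hu : x v = some u) :
    cnt x u (v - 1) < c u := by
  cases hmove with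
  | followRL _ hx => exact hxt u (hx ▸ hu)
  | followExpert u' _ hcap hx => exact Option.some_injective _ (hx.symm.trans hu) ▸ hcap
  | skip hx _ => simp [hx] at hu

lemma LomarMove.robust_succ {n : ℕ} (hmove : LomarMove c wmax w ρ B xπ x xt (n + 1))
    (hw₀ : ∀ u v, 0 ≤ w u v) (hw₁ : ∀ u v, w u v ≤ wmax u) (hρ₀ : 0 ≤ ρ) (hρ₁ : ρ ≤ 1)
    (hπfeas : ∀ u, cnt xπ u (n + 1) ≤ c u)
    (ih : rew w x n ≥ ρ * (rew w xπ n + excessValue wmax xπ x n) - B) :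
    rew w x (n + 1) ≥ ρ * (rew w xπ (n + 1) + excessValue wmax xπ x (n + 1)) - B := by
  have hagree (h : x (n + 1) = xπ (n + 1)) :
      rew w x (n + 1) ≥ ρ * (rew w xπ (n + 1) + excessValue wmax xπ x (n + 1)) - B := by
    have hgain : 0 ≤ (xπ (n + 1)).elim 0 fun u => w u (n + 1) := by
      cases xπ (n + 1) <;> simp [hw₀]
    rw [excessValue_succ_of_eq h, rew_succ, rew_succ, h]
    nlinarith
  cases hmove with
  | followRL hc hx =>
    have hexcess : excessValue wmax xπ x (n + 1) = ∑ u : U, max ((cnt x u n : ℝ) -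
        cnt xπ u (n + 1) + if xt (n + 1) = some u then 1 else 0) 0 * wmax u := by
      refine sum_congr rfl fun u _ => ?_
      rw [cnt_succ x, hx]
      push_cast
      ring_nf
    rw [lomarCond, Nat.add_sub_cancel] at hc
    rwa [hexcess, rew_succ, hx]
  | followExpert u hπ _ hx => exact hagree (hx.trans hπ.symm)
  | skip hx hblocked =>
    cases hπ : xπ (n + 1) with
    | none => exact hagree (hx.trans hπ.symm)
    | some u₀ =>
      have hlt : cnt xπ u₀ n < cnt x u₀ n := by
        have hπcap := hπfeas u₀
        have hfull := hblocked u₀ hπ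
        rw [cnt_succ, hπ, if_pos rfl] at hπcap
        rw [Nat.add_sub_cancel] at hfull
        omega
      rw [excessValue_succ_of_lt hx hπ hlt, rew_succ, rew_succ, hx, hπ]
      have := mul_le_mul_of_nonneg_left (hw₁ u₀ (n + 1)) hρ₀
      simp only [Option.elim_none, Option.elim_some]
      linarith

lemma robust_of_lomarMove {T : ℕ}
    (hmove : ∀ v, 1 ≤ v → v ≤ T → LomarMove c wmax w ρ B xπ x xt v)
    (hw₀ : ∀ u v, 0 ≤ w u v) (hw₁ : ∀ u v, w u v ≤ wmax u) (hρ₀ : 0 ≤ ρ) (hρ₁ : ρ ≤ 1)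
    (hB : 0 ≤ B) (hπfeas : ∀ u, cnt xπ u T ≤ c u) :
    rew w x T ≥ ρ * (rew w xπ T + excessValue wmax xπ x T) - B := by
  induction T with
  | zero => simpa [excessValue] using hB
  | succ n ih =>
    refine (hmove (n + 1) (by omega) le_rfl).robust_succ hw₀ hw₁ hρ₀ hρ₁ hπfeas (ih ?_ ?_)
    · exact fun v hv₁ hv₂ => hmove v hv₁ (by omega)
    · exact fun u => (cnt_mono xπ u n.le_succ).trans (hπfeas u)

end Lomar

end

/-- **Theorem 1 (LOMAR robustness, no free disposal).**
For every `ρ ∈ [0,1]`, `B ≥ 0`, every feasible expert strategy `x^π`, and every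
sequence of RL suggestions `x̃` (which only suggests offline items with remaining
capacity under LOMAR's own counts), the strategy `x` produced by LOMAR's switching
rule is feasible and its total reward satisfies `R_T ≥ ρ·R^π_T − B`. -/
theorem lomar_robustness
    {U : Type*} [Fintype U] [DecidableEq U]
    (c : U → ℕ) (wmax : U → ℝ) (T : ℕ) (w : U → ℕ → ℝ)
    (hw₀ : ∀ u v, 0 ≤ w u v) (hw₁ : ∀ u v, w u v ≤ wmax u)
    (ρ B : ℝ) (hρ₀ : 0 ≤ ρ) (hρ₁ : ρ ≤ 1) (hB : 0 ≤ B)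
    (xπ : ℕ → Option U) (hπfeas : ∀ u, cnt xπ u T ≤ c u)
    (xt x : ℕ → Option U)
    (hxt : ∀ v, 1 ≤ v → v ≤ T → ∀ u, xt v = some u → cnt x u (v - 1) < c u)
    (hfollow : ∀ v, 1 ≤ v → v ≤ T →
      lomarCond wmax w ρ B xπ x xt v → x v = xt v)
    (hexpert : ∀ v, 1 ≤ v → v ≤ T → ¬ lomarCond wmax w ρ B xπ x xt v →
      ∀ u, xπ v = some u → cnt x u (v - 1) < c u → x v = some u)
    (hskip : ∀ v, 1 ≤ v → v ≤ T → ¬ lomarCond wmax w ρ B xπ x xt v →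
      (xπ v = none ∨ ∃ u, xπ v = some u ∧ ¬ cnt x u (v - 1) < c u) → x v = none) :
    (∀ u, cnt x u T ≤ c u) ∧ rew w x T ≥ ρ * rew w xπ T - B := by
  have hmove : ∀ v, 1 ≤ v → v ≤ T → LomarMove c wmax w ρ B xπ x xt v := fun v hv₁ hv₂ =>
    lomarMove_of_switchingRule (hfollow v hv₁ hv₂) (hexpert v hv₁ hv₂) (hskip v hv₁ hv₂)
  have hwmax u : 0 ≤ wmax u := (hw₀ u 0).trans (hw₁ u 0)
  have hrobust := robust_of_lomarMove hmove hw₀ hw₁ hρ₀ hρ₁ hB hπfeas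
  refine ⟨cnt_le_of_forall_lt fun v hv₁ hv₂ _ => (hmove v hv₁ hv₂).cnt_lt (hxt v hv₁ hv₂), ?_⟩
  nlinarith [mul_nonneg hρ₀ (excessValue_nonneg hwmax xπ x T)]
end

section
/- Let U be a finite set, wmax : U → ℝ, ρ ∈ [0,1], B ≥ 0, counts n, m : U → ℕ, reals R, Rπ, an item u* ∈ U with n(u*) ≥ m(u*) + 1, and a reward w with 0 ≤ w ≤ wmax(u*). If R ≥ ρ·( Rπ + Σ_{u∈U} (n(u) − m(u))^+ · wmax(u) ) − B, then R ≥ ρ·( Rπ + w + Σ_{u∈U} (n(u) − m'(u))^+ · wmax(u) ) − B, where m'(u*) = m(u*) + 1 and m'(u) = m(u) for u ≠ u*. (This is the paper's Lemma 1: if the robustness invariant holds after step v−1 and the expert's chosen item is unavailable to LOMAR, then skipping preserves the invariant after the expert collects reward w for that item.) -/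
/-! Since LOMAR already holds strictly more copies of `u*` than the expert, raising the expert's
count of `u*` by one lowers the positive part `(n(u*) - m(u*))^+` by exactly one, so the
right-hand side of the invariant gains `ρ w` and loses `ρ wmax(u*) ≥ ρ w`. -/

open Finset

lemma max_sub_add_one_zero_of_add_one_le {a b : ℝ} (h : b + 1 ≤ a) :
    max (a - (b + 1)) 0 = max (a - b) 0 - 1 := by
  rw [max_eq_left (by linarith), max_eq_left (by linarith)]
  ring

theorem sum_max_sub_update_succ_mul {U : Type*} [Fintype U] [DecidableEq U]
    (n m : U → ℕ) (c : U → ℝ) (i : U) (hi : m i + 1 ≤ n i) :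
    ∑ u : U, max ((n u : ℝ) - ((Function.update m i (m i + 1)) u : ℝ)) 0 * c u
      = ∑ u : U, max ((n u : ℝ) - (m u : ℝ)) 0 * c u - c i := by
  have hi' : (m i : ℝ) + 1 ≤ n i := by exact_mod_cast hi
  rw [← add_sum_erase _ _ (mem_univ i), ← add_sum_erase _ _ (mem_univ i),
    Function.update_self, Nat.cast_succ, max_sub_add_one_zero_of_add_one_le hi']
  have hrest : ∑ u ∈ univ.erase i, max ((n u : ℝ) - ((Function.update m i (m i + 1)) u : ℝ)) 0 * c u
      = ∑ u ∈ univ.erase i, max ((n u : ℝ) - (m u : ℝ)) 0 * c u :=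
    sum_congr rfl fun u hu => by rw [Function.update_of_ne (ne_of_mem_erase hu)]
  rw [hrest]
  ring

theorem lomar_skip_preserves_invariant_general
    {U : Type*} [Fintype U] [DecidableEq U]
    (wmax : U → ℝ) (ρ B : ℝ) (hρ₀ : 0 ≤ ρ)
    (n m : U → ℕ) (R Rπ : ℝ) (ustar : U)
    (hcap : m ustar + 1 ≤ n ustar)
    (w : ℝ) (hw₁ : w ≤ wmax ustar)
    (hinv : R ≥ ρ * (Rπ + ∑ u : U, max ((n u : ℝ) - (m u : ℝ)) 0 * wmax u) - B) :
    R ≥ ρ * (Rπ + w +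
      ∑ u : U, max ((n u : ℝ) - ((Function.update m ustar (m ustar + 1)) u : ℝ)) 0 * wmax u)
      - B := by
  rw [sum_max_sub_update_succ_mul n m wmax ustar hcap]
  have hdecrease : ρ * (Rπ + w + (∑ u : U, max ((n u : ℝ) - (m u : ℝ)) 0 * wmax u - wmax ustar))
      ≤ ρ * (Rπ + ∑ u : U, max ((n u : ℝ) - (m u : ℝ)) 0 * wmax u) :=
    mul_le_mul_of_nonneg_left (by linarith) hρ₀
  linarith

/-- **Lemma 1 (no-free-disposal skip step).**
If the robustness invariant holds after step `v-1` and the expert's chosen item `ustar`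
is unavailable to LOMAR (LOMAR has matched it at least one more time than the expert),
then skipping preserves the invariant after the expert collects reward `w` for that item. -/
theorem lomar_skip_preserves_invariant
    {U : Type*} [Fintype U] [DecidableEq U]
    (wmax : U → ℝ) (ρ B : ℝ) (hρ₀ : 0 ≤ ρ) (hρ₁ : ρ ≤ 1) (hB : 0 ≤ B)
    (n m : U → ℕ) (R Rπ : ℝ) (ustar : U)
    (hcap : m ustar + 1 ≤ n ustar)
    (w : ℝ) (hw₀ : 0 ≤ w) (hw₁ : w ≤ wmax ustar)
    (hinv : R ≥ ρ * (Rπ + ∑ u : U, max ((n u : ℝ) - (m u : ℝ)) 0 * wmax u) - B) :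
    R ≥ ρ * (Rπ + w +
      ∑ u : U, max ((n u : ℝ) - ((Function.update m ustar (m ustar + 1)) u : ℝ)) 0 * wmax u)
      - B :=
  lomar_skip_preserves_invariant_general wmax ρ B hρ₀ n m R Rπ ustar hcap w hw₁ hinv
end

section
/- Fix c ≥ 1. For all states a, b of length c (nondecreasing tuples of nonnegative reals) and every w ≥ 0: (Σ ins(a,w) − Σ a) − (Σ ins(b,w) − Σ b) ≥ H(ins(a,w), ins(b,w)) − H(a,b). (This is the single-offline-item form of the paper's free-disposal hedging lemma, Lemma 2: the difference between LOMAR's and the expert's marginal rewards from the same online item is at least the increase of the hedging term.) -/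
/-- Free-disposal insertion: given a state `l` (a nondecreasing list of length `c`
of nonnegative reals) and a new reward `w ≥ 0`, `ins l w` is `l` itself if
`w ≤ l₁` (the smallest entry), and otherwise the nondecreasing rearrangement of
`(l₂, …, l_c, w)` (the smallest entry is disposed). -/
noncomputable def ins (l : List ℝ) (w : ℝ) : List ℝ :=
  if w ≤ l.headI then l else l.tail.orderedInsert (· ≤ ·) w

/-- The hedging term for a single offline item of capacity `c`:
`H(a, b) = ( max_{1 ≤ i ≤ c} Σ_{j=1}^{i} (a_j − b_j) )⁺`. -/
noncomputable def hedge (c : ℕ) (a b : List ℝ) : ℝ :=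
  max (sSup ((fun i => ∑ j ∈ Finset.range i, (a.getD j 0 - b.getD j 0)) ''
    Set.Icc 1 c)) 0

/-!
Write `P_l(i)` for the sum of the first `i` entries of `l`, `g_l = (w - l₁)⁺` and
`q_l(i) = (w - l_{i+1})⁺`, read as `0` for `i = c`. Inserting `w` replaces `P_l(i)` by
`P_l(i) + g_l - q_l(i)`, so the prefix-sum difference of the two states grows by
`g_a - g_b + q_b(i) - q_a(i)`. The marginal rewards are `g_a` and `g_b`, and the excess
`q_b(i) - q_a(i) ≤ (a_{i+1} - b_{i+1})⁺` is absorbed by `H(a, b)`, which dominates both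
`P_a(i) - P_b(i)` and `P_a(i+1) - P_b(i+1)`.
-/

noncomputable def prefixSum (l : List ℝ) (i : ℕ) : ℝ := ∑ j ∈ Finset.range i, l.getD j 0

@[simp]
lemma prefixSum_zero (l : List ℝ) : prefixSum l 0 = 0 := by simp [prefixSum]

lemma prefixSum_succ (l : List ℝ) (i : ℕ) :
    prefixSum l (i + 1) = prefixSum l i + l.getD i 0 :=
  Finset.sum_range_succ _ _

@[simp]
lemma prefixSum_cons_succ (x : ℝ) (l : List ℝ) (i : ℕ) :
    prefixSum (x :: l) (i + 1) = x + prefixSum l i := by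
  simp [prefixSum, Finset.sum_range_succ', add_comm]

lemma min_headI_le_getD {l : List ℝ} (hl : l.Pairwise (· ≤ ·)) (d : ℝ) (i : ℕ) :
    min l.headI d ≤ l.getD i d := by
  match l, i with
  | [], _ => simp
  | x :: _, 0 => simp
  | x :: t, i + 1 =>
    rw [List.getD_cons_succ]
    rcases lt_or_ge i t.length with hi | hi
    · rw [List.getD_eq_getElem _ _ hi]
      exact min_le_of_left_le ((List.pairwise_cons.mp hl).1 _ (List.getElem_mem hi))
    · rw [List.getD_eq_default _ _ hi]
      exact min_le_right _ _

/-- The convention `l.getD l.length w = w` makes the formula hold at the end of the list too. -/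
lemma prefixSum_orderedInsert_succ {l : List ℝ} (hl : l.Pairwise (· ≤ ·)) (w : ℝ) {i : ℕ}
    (hi : i ≤ l.length) :
    prefixSum (l.orderedInsert (· ≤ ·) w) (i + 1) = prefixSum l i + min (l.getD i w) w := by
  induction l generalizing i with
  | nil => simp_all
  | cons x t ih =>
    by_cases hwx : w ≤ x
    · have hw : w ≤ (x :: t).getD i w := by
        simpa [hwx] using min_headI_le_getD hl w i
      rw [List.orderedInsert_cons_of_le (· ≤ ·) t hwx, prefixSum_cons_succ, min_eq_right hw,
        add_comm]
    · rw [List.orderedInsert_of_not_le (· ≤ ·) t hwx]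
      cases i with
      | zero => simp [(not_le.mp hwx).le]
      | succ k =>
        rw [prefixSum_cons_succ, ih hl.of_cons (by simpa using hi), prefixSum_cons_succ,
          List.getD_cons_succ, add_assoc]

lemma prefixSum_ins {l : List ℝ} (hl : l.Pairwise (· ≤ ·)) (hne : l ≠ []) (w : ℝ)
    {i : ℕ} (hi : i ≤ l.length) :
    prefixSum (ins l w) i =
      prefixSum l i + max (w - l.headI) 0 - max (w - l.getD i w) 0 := by
  obtain ⟨x, t, rfl⟩ := List.exists_cons_of_ne_nil hne
  have hins : ins (x :: t) w = if w ≤ x then x :: t else t.orderedInsert (· ≤ ·) w := rfl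
  rw [List.headI]
  by_cases hwx : w ≤ x
  · have hw : w ≤ (x :: t).getD i w := by
      simpa [hwx] using min_headI_le_getD hl w i
    rw [hins, if_pos hwx, max_eq_right (by linarith), max_eq_right (by linarith)]
    ring
  · have hcons := prefixSum_orderedInsert_succ hl w hi
    rw [List.orderedInsert_of_not_le (· ≤ ·) t hwx, prefixSum_cons_succ] at hcons
    have hmin_eq : min ((x :: t).getD i w) w = w - max (w - (x :: t).getD i w) 0 := by
      rcases le_total ((x :: t).getD i w) w with h | h
      · rw [min_eq_left h, max_eq_left (by linarith)]; ring
      · rw [min_eq_right h, max_eq_right (by linarith)]; ring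
    rw [hins, if_neg hwx, max_eq_left (by linarith)]
    linarith

lemma sum_ins {l : List ℝ} (hne : l ≠ []) (w : ℝ) :
    (ins l w).sum = l.sum + max (w - l.headI) 0 := by
  obtain ⟨x, t, rfl⟩ := List.exists_cons_of_ne_nil hne
  by_cases hwx : w ≤ x
  · simp [ins, hwx]
  · have hperm := (List.perm_orderedInsert (· ≤ ·) w t).sum_eq
    simp only [List.sum_cons] at hperm
    have hins : ins (x :: t) w = t.orderedInsert (· ≤ ·) w := if_neg hwx
    rw [hins, hperm, List.sum_cons, List.headI, max_eq_left (sub_nonneg.mpr (not_le.mp hwx).le)]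
    ring

lemma hedge_eq (c : ℕ) (a b : List ℝ) :
    hedge c a b = max (sSup ((fun i => prefixSum a i - prefixSum b i) '' Set.Icc 1 c)) 0 := by
  simp only [hedge, prefixSum, Finset.sum_sub_distrib]

lemma le_hedge {c i : ℕ} (a b : List ℝ) (hi : i ≤ c) :
    prefixSum a i - prefixSum b i ≤ hedge c a b := by
  rw [hedge_eq]
  rcases Nat.eq_zero_or_pos i with rfl | hi0
  · simp
  · exact le_max_of_le_left <| le_csSup ((Set.finite_Icc 1 c).image _).bddAbove
      (Set.mem_image_of_mem _ ⟨hi0, hi⟩)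

lemma hedge_le {c : ℕ} (hc : 1 ≤ c) {a b : List ℝ} {M : ℝ}
    (h : ∀ i ≤ c, prefixSum a i - prefixSum b i ≤ M) : hedge c a b ≤ M := by
  rw [hedge_eq]
  refine max_le (csSup_le (Set.Nonempty.image _ ⟨1, le_rfl, hc⟩) ?_)
    (by simpa using h 0 c.zero_le)
  rintro _ ⟨i, ⟨-, hi⟩, rfl⟩
  exact h i hi

lemma prefixSum_sub_add_max_getD_le_hedge {c i : ℕ} {a b : List ℝ} (ha : a.length = c)
    (hb : b.length = c) (w : ℝ) (hi : i ≤ c) :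
    prefixSum a i - prefixSum b i + max (a.getD i w - b.getD i w) 0 ≤ hedge c a b := by
  rcases hi.lt_or_eq with hi | rfl
  · have hsucc := le_hedge a b (Nat.succ_le_of_lt hi)
    rw [prefixSum_succ, prefixSum_succ] at hsucc
    rw [List.getD_eq_getElem _ _ (ha ▸ hi), List.getD_eq_getElem _ _ (hb ▸ hi)] at hsucc ⊢
    rcases le_total (a[i]'(ha ▸ hi) - b[i]'(hb ▸ hi)) 0 with h | h
    · rw [max_eq_right h, add_zero]; exact le_hedge a b hi.le
    · rw [max_eq_left h]; linarith
  · rw [List.getD_eq_default _ _ ha.le, List.getD_eq_default _ _ hb.le, sub_self, max_self,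
      add_zero]
    exact le_hedge a b le_rfl

lemma hedge_ins_le {c : ℕ} (hc : 1 ≤ c) {a b : List ℝ} (ha_len : a.length = c)
    (hb_len : b.length = c) (ha : a.Pairwise (· ≤ ·)) (hb : b.Pairwise (· ≤ ·)) (w : ℝ) :
    hedge c (ins a w) (ins b w) ≤
      hedge c a b + (max (w - a.headI) 0 - max (w - b.headI) 0) := by
  have ha_ne : a ≠ [] := List.ne_nil_of_length_pos (by omega)
  have hb_ne : b ≠ [] := List.ne_nil_of_length_pos (by omega)
  refine hedge_le hc fun i hi => ?_
  rw [prefixSum_ins ha ha_ne w (ha_len ▸ hi), prefixSum_ins hb hb_ne w (hb_len ▸ hi)]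
  have hq := max_sub_max_le_max (w - b.getD i w) 0 (w - a.getD i w) 0
  have hH := prefixSum_sub_add_max_getD_le_hedge ha_len hb_len w hi
  rw [sub_sub_sub_cancel_left, sub_zero] at hq
  linarith

theorem hedging_lemma_general (c : ℕ) (hc : 1 ≤ c) (a b : List ℝ)
    (ha_len : a.length = c) (hb_len : b.length = c)
    (ha_sorted : a.Pairwise (· ≤ ·)) (hb_sorted : b.Pairwise (· ≤ ·))
    (w : ℝ) :
    ((ins a w).sum - a.sum) - ((ins b w).sum - b.sum) ≥
      hedge c (ins a w) (ins b w) - hedge c a b := by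
  rw [sum_ins (List.ne_nil_of_length_pos (by omega : 0 < a.length)),
    sum_ins (List.ne_nil_of_length_pos (by omega : 0 < b.length))]
  have hH := hedge_ins_le hc ha_len hb_len ha_sorted hb_sorted w
  linarith

/-- **Lemma 2, single-offline-item form (free-disposal hedging lemma).**
For all states `a`, `b` of length `c ≥ 1` and every `w ≥ 0`, the difference between
LOMAR's and the expert's marginal rewards from the same online item is at least the
increase of the hedging term:
`(Σ ins(a,w) − Σ a) − (Σ ins(b,w) − Σ b) ≥ H(ins(a,w), ins(b,w)) − H(a,b)`. -/
theorem hedging_lemma (c : ℕ) (hc : 1 ≤ c) (a b : List ℝ)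
    (ha_len : a.length = c) (hb_len : b.length = c)
    (ha_sorted : a.Pairwise (· ≤ ·)) (hb_sorted : b.Pairwise (· ≤ ·))
    (ha_nonneg : ∀ x ∈ a, (0 : ℝ) ≤ x) (hb_nonneg : ∀ x ∈ b, (0 : ℝ) ≤ x)
    (w : ℝ) (hw : 0 ≤ w) :
    ((ins a w).sum - a.sum) - ((ins b w).sum - b.sum) ≥
      hedge c (ins a w) (ins b w) - hedge c a b :=
  hedging_lemma_general c hc a b ha_len hb_len ha_sorted hb_sorted w
end

section
/- Fix c ≥ 1. For all states a, b of length c (nondecreasing tuples of nonnegative reals) and every w ≥ 0 with a_1 ≤ w ≤ b_1: H(ins(a,w), b) − H(a,b) ≤ w − a_1. (Case 3 of the proof of the free-disposal hedging lemma: the new reward displaces the smallest entry of the first list but is disposed by the second list.) -/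
theorem List.sum_range_getD_eq_sum_take {M : Type*} [AddCommMonoid M] (l : List M) (i : ℕ) :
    ∑ j ∈ Finset.range i, l.getD j 0 = (l.take i).sum := by
  induction i with
  | zero => simp
  | succ n ih =>
    rw [Finset.sum_range_succ, ih, List.take_add_one, List.sum_append, List.getD_eq_getElem?_getD]
    cases l[n]? <;> simp

theorem List.sum_take_orderedInsert_le {α : Type*} [AddCommGroup α] [LinearOrder α]
    [IsOrderedAddMonoid α] (t : List α) {x w : α} (hxw : x ≤ w) (i : ℕ) :
    ((t.orderedInsert (· ≤ ·) w).take i).sum ≤ ((x :: t).take i).sum + (w - x) := by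
  induction t generalizing x i with
  | nil => cases i <;> simp [hxw]
  | cons y t ih =>
    rcases i with _ | i
    · simp [hxw]
    by_cases hwy : w ≤ y
    · simp only [List.orderedInsert, hwy, if_true, List.take_succ_cons, List.sum_cons]
      exact le_of_eq (by abel)
    · simp only [List.orderedInsert, hwy, if_false, List.take_succ_cons, List.sum_cons]
      calc y + ((t.orderedInsert (· ≤ ·) w).take i).sum
          ≤ y + (((y :: t).take i).sum + (w - y)) := by gcongr; exact ih (le_of_not_ge hwy) i
        _ = x + ((y :: t).take i).sum + (w - x) := by abel

theorem sum_take_ins_le (a : List ℝ) {w : ℝ} (hwa : a.headI ≤ w) (i : ℕ) :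
    ((ins a w).take i).sum ≤ (a.take i).sum + (w - a.headI) := by
  unfold ins
  split_ifs
  · linarith
  · rcases a with _ | ⟨x, t⟩
    · have hdefault : (default : ℝ) = 0 := rfl
      cases i <;> simp_all
    · exact List.sum_take_orderedInsert_le t hwa i

theorem hedge_le_add_of_sum_take_le {c : ℕ} {a a' b : List ℝ} {δ : ℝ} (hδ : 0 ≤ δ)
    (h : ∀ i, (a'.take i).sum ≤ (a.take i).sum + δ) :
    hedge c a' b ≤ hedge c a b + δ := by
  set f := fun i => ∑ j ∈ Finset.range i, (a.getD j 0 - b.getD j 0)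
  have hf_bdd : BddAbove (f '' Set.Icc 1 c) := ((Set.finite_Icc 1 c).image f).bddAbove
  have hsup : sSup ((fun i => ∑ j ∈ Finset.range i, (a'.getD j 0 - b.getD j 0)) ''
      Set.Icc 1 c) ≤ hedge c a b + δ := by
    -- `Real.sSup_le` needs no nonemptiness, so `c = 0` (where `sSup ∅ = 0`) is covered too.
    refine Real.sSup_le ?_ (add_nonneg (le_max_right _ _) hδ)
    rintro _ ⟨i, hi, rfl⟩
    have hfi : f i ≤ hedge c a b := (le_csSup hf_bdd ⟨i, hi, rfl⟩).trans (le_max_left _ _)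
    simp only [f, Finset.sum_sub_distrib, List.sum_range_getD_eq_sum_take] at hfi ⊢
    linarith [h i]
  exact max_le hsup (add_nonneg (le_max_right _ _) hδ)

theorem hedging_case3_general (c : ℕ) (a b : List ℝ)
    (w : ℝ) (hwa : a.headI ≤ w) :
    hedge c (ins a w) b - hedge c a b ≤ w - a.headI :=
  sub_le_iff_le_add'.2 <| hedge_le_add_of_sum_take_le (sub_nonneg.2 hwa) (sum_take_ins_le a hwa)

/-- **Case 3 of the free-disposal hedging lemma.**
When the new reward `w` displaces the smallest entry of the first list but is
disposed by the second list (`a₁ ≤ w ≤ b₁`):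
`H(ins(a,w), b) − H(a,b) ≤ w − a₁`. -/
theorem hedging_case3 (c : ℕ) (hc : 1 ≤ c) (a b : List ℝ)
    (ha_len : a.length = c) (hb_len : b.length = c)
    (ha_sorted : a.Pairwise (· ≤ ·)) (hb_sorted : b.Pairwise (· ≤ ·))
    (ha_nonneg : ∀ x ∈ a, (0 : ℝ) ≤ x) (hb_nonneg : ∀ x ∈ b, (0 : ℝ) ≤ x)
    (w : ℝ) (hw : 0 ≤ w) (hwa : a.headI ≤ w) (hwb : w ≤ b.headI) :
    hedge c (ins a w) b - hedge c a b ≤ w - a.headI :=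
  hedging_case3_general c a b w hwa
end
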